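/- Suppose a sequence of continuous maps fₙ : X → Y converges stably to f : X → Y, where Y has functionally closed diagonal in Y × Y. Then there is an increasing sequence (Xₙ) of functionally closed subsets of X with ⋃ₙ Xₙ = X and fₙ = f on Xₙ for each n. -/
import Mathlib


def FunctionallyClosed {X : Type*} [TopologicalSpace X] (A : Set X) : Prop :=
  ∃ φ : X → ℝ, Continuous φ ∧ (∀ x, φ x ∈ Set.Icc (0 : ℝ) 1) ∧ A = φ ⁻¹' {0}

lemma fc_iInter {X : Type*} [TopologicalSpace X] (A : ℕ → Set X)
    (h : ∀ n, FunctionallyClosed (A n)) : FunctionallyClosed (⋂ n, A n) := by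
  choose φ hc hb hA using h
  have hsum : Summable (fun k : ℕ => ((1:ℝ)/2) ^ (k + 1)) := by
    simpa [pow_succ, mul_comm] using summable_geometric_two.mul_left (1/2 : ℝ)
  have hptsum : ∀ x, Summable (fun k : ℕ => ((1:ℝ)/2) ^ (k + 1) * φ k x) := by
    intro x
    refine Summable.of_nonneg_of_le (fun k => ?_) (fun k => ?_) hsum
    · exact mul_nonneg (by positivity) (hb k x).1
    · calc ((1:ℝ)/2) ^ (k + 1) * φ k x ≤ ((1:ℝ)/2) ^ (k + 1) * 1 :=
            mul_le_mul_of_nonneg_left (hb k x).2 (by positivity)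
        _ = ((1:ℝ)/2) ^ (k + 1) := mul_one _
  refine ⟨fun x => ∑' k, ((1:ℝ)/2) ^ (k + 1) * φ k x, ?_, ?_, ?_⟩
  · refine continuous_tsum (fun k => (continuous_const.mul (hc k))) hsum (fun k x => ?_)
    rw [Real.norm_eq_abs, abs_mul, abs_of_nonneg (by positivity : (0:ℝ) ≤ ((1:ℝ)/2)^(k+1)),
      abs_of_nonneg (hb k x).1]
    calc ((1:ℝ)/2) ^ (k + 1) * φ k x ≤ ((1:ℝ)/2) ^ (k + 1) * 1 :=
          mul_le_mul_of_nonneg_left (hb k x).2 (by positivity)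
      _ = ((1:ℝ)/2) ^ (k + 1) := mul_one _
  · intro x
    constructor
    · exact tsum_nonneg (fun k => mul_nonneg (by positivity) (hb k x).1)
    · have h1 : ∑' k : ℕ, ((1:ℝ)/2) ^ (k + 1) = 1 := by
        have : ∑' k : ℕ, ((1:ℝ)/2) ^ (k + 1) = (1/2) * ∑' k : ℕ, ((1:ℝ)/2) ^ k := by
          rw [← tsum_mul_left]
          congr 1; funext k; ring
        rw [this, tsum_geometric_two]; norm_num
      calc ∑' k, ((1:ℝ)/2) ^ (k + 1) * φ k x ≤ ∑' k : ℕ, ((1:ℝ)/2) ^ (k + 1) := by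
            refine Summable.tsum_le_tsum (fun k => ?_) (hptsum x) hsum
            calc ((1:ℝ)/2) ^ (k + 1) * φ k x ≤ ((1:ℝ)/2) ^ (k + 1) * 1 :=
                  mul_le_mul_of_nonneg_left (hb k x).2 (by positivity)
              _ = ((1:ℝ)/2) ^ (k + 1) := mul_one _
        _ = 1 := h1
  · ext x
    simp only [Set.mem_iInter, Set.mem_preimage, Set.mem_singleton_iff]
    constructor
    · intro hx
      have : ∀ k, φ k x = 0 := by
        intro k
        have := hA k
        have hxk : x ∈ A k := hx k
        rw [this] at hxk
        exact hxk
      simp [this]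
    · intro hx k
      rw [hA k, Set.mem_preimage, Set.mem_singleton_iff]
      by_contra hne
      have hpos : 0 < φ k x := lt_of_le_of_ne (hb k x).1 (Ne.symm hne)
      have hle : ((1:ℝ)/2) ^ (k + 1) * φ k x ≤ ∑' j, ((1:ℝ)/2) ^ (j + 1) * φ j x :=
        Summable.le_tsum (hptsum x) k (fun j _ => mul_nonneg (by positivity) (hb j x).1)
      rw [hx] at hle
      have : (0:ℝ) < ((1:ℝ)/2) ^ (k + 1) * φ k x := mul_pos (by positivity) hpos
      linarith

/-- If continuous maps `fₙ` converge stably to `f` and `Y` has functionally closed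
diagonal, then there is an increasing functionally closed cover on which `fₙ = f`. -/
theorem stmt_10 {X Y : Type*} [TopologicalSpace X] [TopologicalSpace Y]
    (hΔ : FunctionallyClosed {p : Y × Y | p.1 = p.2})
    (F : ℕ → X → Y) (hF : ∀ n, Continuous (F n)) (f : X → Y)
    (hst : ∀ x, ∃ k, ∀ n ≥ k, F n x = f x) :
    ∃ Xn : ℕ → Set X, (∀ n, FunctionallyClosed (Xn n)) ∧ (∀ n, Xn n ⊆ Xn (n + 1)) ∧
      (⋃ n, Xn n) = Set.univ ∧ ∀ n, Set.EqOn (F n) f (Xn n) := by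
  obtain ⟨φΔ, hcΔ, hbΔ, hAΔ⟩ := hΔ
  set Xn : ℕ → Set X := fun n => ⋂ k : ℕ, {x | F (n + k) x = F n x} with hXn
  have hmem : ∀ n x, x ∈ Xn n ↔ ∀ k, F (n + k) x = F n x := by
    intro n x; simp [hXn]
  refine ⟨Xn, ?_, ?_, ?_, ?_⟩
  · intro n
    apply fc_iInter
    intro k
    refine ⟨fun x => φΔ (F (n + k) x, F n x),
      hcΔ.comp ((hF (n + k)).prodMk (hF n)), fun x => hbΔ _, ?_⟩
    ext x
    simp only [Set.mem_setOf_eq, Set.mem_preimage, Set.mem_singleton_iff]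
    constructor
    · intro hx
      have : (F (n + k) x, F n x) ∈ {p : Y × Y | p.1 = p.2} := hx
      rw [hAΔ] at this; exact this
    · intro hx
      have : (F (n + k) x, F n x) ∈ φΔ ⁻¹' {0} := hx
      rw [← hAΔ] at this; exact this
  · intro n x hx
    rw [hmem] at hx ⊢
    intro k
    have h1 : F (n + 1 + k) x = F n x := by
      have := hx (1 + k); rwa [← add_assoc] at this
    have h2 : F (n + 1) x = F n x := hx 1
    rw [h1, h2]
  · ext x
    simp only [Set.mem_iUnion, Set.mem_univ, iff_true]
    obtain ⟨k, hk⟩ := hst x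
    refine ⟨k, (hmem k x).mpr fun j => ?_⟩
    rw [hk (k + j) (Nat.le_add_right _ _), hk k le_rfl]
  · intro n x hx
    obtain ⟨k, hk⟩ := hst x
    have h1 : F (n + k) x = F n x := (hmem n x).mp hx k
    have h2 : F (n + k) x = f x := hk (n + k) (Nat.le_add_left _ _)
    rw [← h1, h2]
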